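/- Let q be odd and n ≥ 2. If two spheres S_{r₁}(a) and S_{r₂}(b) in F_qⁿ are distinct (i.e., (a, r₁) ≠ (b, r₂)), then their intersection contains at most q^{n−2} + q^{⌊(n−1)/2⌋} points. -/

import Mathlib

/-!
Translating by `a`, the intersection becomes `{y | ∑ yᵢ² = r₁, ∑ vᵢ yᵢ = c}` with
`v = b - a ≠ 0`. Detecting both equations with a primitive additive character `ψ`, its size
times `q²` is `∑ s, ∑ t, ∑ y, ψ (s (∑ yᵢ² - r₁) + t (∑ vᵢ yᵢ - c))`. The term `s = 0` is exactly
`q^n`. For `s ≠ 0` the sum over `y` factors into one-variable quadratic Gauss sums, and the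
remaining sums over `t` and `s` are again Gauss sums or sums of `ψ` over `Fˣ`. Since the Gauss
sum `G` satisfies `G² = ±q`, the other terms add up to at most `q^(⌊(n+1)/2⌋+1)` in absolute
value; dividing by `q²` gives the bound.
-/

open Finset AddChar MulChar

theorem AddChar.map_sum_eq_prod {A M ι : Type*} [AddCommMonoid A] [CommMonoid M]
    (ψ : AddChar A M) (s : Finset ι) (g : ι → A) : ψ (∑ i ∈ s, g i) = ∏ i ∈ s, ψ (g i) :=
  map_prod ψ.toMonoidHom (fun i ↦ Multiplicative.ofAdd (g i)) s

noncomputable def quadraticCharℂ (F : Type*) [Field F] [Fintype F] [DecidableEq F] :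
    MulChar F ℂ :=
  (quadraticChar F).ringHomComp (Int.castRingHom ℂ)

lemma four_ne_zero_of_ringChar_ne_two {F : Type*} [Field F] (hF : ringChar F ≠ 2) :
    (4 : F) ≠ 0 := by
  rw [show (4 : F) = 2 ^ 2 by norm_num]
  exact pow_ne_zero 2 (Ring.two_ne_zero hF)

section QuadraticGaussSum

variable {F : Type*} [Field F] [Fintype F] [DecidableEq F] {ψ : AddChar F ℂ}

local notation "χ" => quadraticCharℂ F
local notation "q" => Fintype.card F

lemma quadraticCharℂ_sq {a : F} (ha : a ≠ 0) : χ a ^ 2 = 1 := by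
  simpa [quadraticCharℂ, ringHomComp_apply] using
    congrArg (Int.cast : ℤ → ℂ) (quadraticChar_sq_one ha)

lemma norm_quadraticCharℂ {a : F} (ha : a ≠ 0) : ‖χ a‖ = 1 := by
  have := congrArg norm (quadraticCharℂ_sq ha)
  rwa [norm_pow, norm_one, pow_eq_one_iff_of_nonneg (norm_nonneg _) two_ne_zero] at this

lemma norm_quadraticCharℂ_le (a : F) : ‖χ a‖ ≤ 1 := by
  rcases eq_or_ne a 0 with rfl | ha
  · simp
  · exact (norm_quadraticCharℂ ha).le

lemma quadraticCharℂ_pow_of_even {a : F} (ha : a ≠ 0) {m : ℕ} (hm : Even m) :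
    χ a ^ m = 1 := by
  obtain ⟨k, rfl⟩ := hm
  rw [← two_mul, pow_mul, quadraticCharℂ_sq ha, one_pow]

lemma quadraticCharℂ_pow_of_odd {a : F} (ha : a ≠ 0) {m : ℕ} (hm : Odd m) :
    χ a ^ m = χ a := by
  obtain ⟨k, rfl⟩ := hm
  rw [pow_succ, pow_mul, quadraticCharℂ_sq ha, one_pow, one_mul]

lemma quadraticCharℂ_ne_one (hF : ringChar F ≠ 2) : χ ≠ 1 := by
  rw [quadraticCharℂ, Ne, ringHomComp_eq_one_iff (Int.cast_injective (α := ℂ))]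
  exact quadraticChar_ne_one hF

lemma norm_gaussSum_pow_two_mul (hF : ringChar F ≠ 2) (hψ : ψ.IsPrimitive) (k : ℕ) :
    ‖gaussSum χ ψ ^ (2 * k)‖ = (q : ℝ) ^ k := by
  rw [pow_mul, gaussSum_sq (quadraticCharℂ_ne_one hF) ((quadraticChar_isQuadratic F).comp _) hψ,
    norm_pow, norm_mul, norm_quadraticCharℂ (neg_ne_zero.mpr one_ne_zero), one_mul,
    Complex.norm_natCast]

lemma sum_addChar_mul_eq_ite (hψ : ψ.IsPrimitive) (e : F) :
    ∑ x, ψ (x * e) = if e = 0 then (q : ℂ) else 0 := by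
  rw [sum_mulShift e hψ]
  split_ifs <;> simp

lemma sum_quadraticCharℂ_mul_addChar (hF : ringChar F ≠ 2) (e : F) :
    ∑ x, χ x * ψ (x * e) = χ e * gaussSum χ ψ := by
  rcases eq_or_ne e 0 with rfl | he
  · simpa using sum_eq_zero_of_ne_one (quadraticCharℂ_ne_one hF)
  · have hshift := gaussSum_mulShift χ ψ (Units.mk0 e he)
    simp only [Units.val_mk0, gaussSum, mulShift_apply] at hshift
    calc ∑ x, χ x * ψ (x * e) = χ e * (χ e * ∑ x, χ x * ψ (e * x)) := by
          simp_rw [← mul_assoc, ← sq, quadraticCharℂ_sq he, one_mul, mul_comm e]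
      _ = χ e * gaussSum χ ψ := by rw [hshift, gaussSum]

/-- Each `x` has `1 + χ x` square roots. -/
lemma sum_sq_eq_sum_one_add_quadraticCharℂ_mul (hF : ringChar F ≠ 2) (f : F → ℂ) :
    ∑ t, f (t ^ 2) = ∑ x, (1 + χ x) * f x := by
  rw [← sum_fiberwise univ (· ^ 2) (fun t ↦ f (t ^ 2))]
  refine sum_congr rfl fun x _ ↦ ?_
  have hcard : (#{t : F | t ^ 2 = x} : ℂ) = 1 + χ x := by
    have := congrArg (Int.cast : ℤ → ℂ) (quadraticChar_card_sqrts hF x)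
    simp only [Set.toFinset_ofPred, Int.cast_natCast] at this
    rw [this, add_comm]
    simp [quadraticCharℂ, ringHomComp_apply]
  rw [sum_congr rfl fun t ht ↦ by rw [(mem_filter.mp ht).2], sum_const, nsmul_eq_mul, hcard]

lemma sum_addChar_mul_sq (hF : ringChar F ≠ 2) (hψ : ψ.IsPrimitive) {u : F} (hu : u ≠ 0) :
    ∑ t, ψ (u * t ^ 2) = χ u * gaussSum χ ψ := by
  rw [sum_sq_eq_sum_one_add_quadraticCharℂ_mul hF (fun x ↦ ψ (u * x))]
  simp_rw [add_mul, one_mul, sum_add_distrib, mul_comm u, sum_addChar_mul_eq_ite hψ, if_neg hu,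
    zero_add, sum_quadraticCharℂ_mul_addChar hF]

lemma sum_addChar_quadratic (hF : ringChar F ≠ 2) (hψ : ψ.IsPrimitive) {u : F} (hu : u ≠ 0)
    (w : F) : ∑ t, ψ (u * t ^ 2 + w * t) = χ u * gaussSum χ ψ * ψ (-w ^ 2 / (4 * u)) := by
  have h2 : (2 : F) ≠ 0 := Ring.two_ne_zero hF
  have h4 := four_ne_zero_of_ringChar_ne_two hF
  have hsquare (t : F) :
      u * (t - w / (2 * u)) ^ 2 + w * (t - w / (2 * u)) = u * t ^ 2 + -w ^ 2 / (4 * u) := by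
    field_simp
    ring
  rw [← (Equiv.subRight (w / (2 * u))).sum_comp]
  simp_rw [Equiv.subRight_apply, hsquare, map_add_eq_mul, ← sum_mul, sum_addChar_mul_sq hF hψ hu]

lemma sum_erase_zero_quadraticCharℂ_pow_mul_addChar_of_even (hψ : ψ.IsPrimitive) {m : ℕ}
    (hm : Even m) (e : F) :
    ∑ s ∈ univ.erase 0, χ s ^ m * ψ (s * e) = (if e = 0 then (q : ℂ) else 0) - 1 := by
  rw [sum_congr rfl fun s hs ↦ by
      rw [quadraticCharℂ_pow_of_even (ne_of_mem_erase hs) hm, one_mul],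
    sum_erase_eq_sub (mem_univ 0), sum_addChar_mul_eq_ite hψ]
  simp

lemma gaussSum_pow_mul_sum_erase_zero_of_odd (hF : ringChar F ≠ 2) (k : ℕ) (e : F) :
    gaussSum χ ψ ^ (2 * k + 1) * ∑ s ∈ univ.erase 0, χ s ^ (2 * k + 1) * ψ (s * e) =
      χ e * gaussSum χ ψ ^ (2 * (k + 1)) := by
  rw [sum_congr rfl fun s hs ↦ by
      rw [quadraticCharℂ_pow_of_odd (ne_of_mem_erase hs) (odd_two_mul_add_one k)],
    sum_erase _ (by simp), sum_quadraticCharℂ_mul_addChar hF]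
  ring

lemma norm_gaussSum_pow_mul_sum_erase_zero_le (hF : ringChar F ≠ 2) (hψ : ψ.IsPrimitive)
    (m : ℕ) (e : F) :
    ‖gaussSum χ ψ ^ m * ∑ s ∈ univ.erase 0, χ s ^ m * ψ (s * e)‖ ≤
      (q : ℝ) ^ (m / 2 + 1) := by
  have hq : (1 : ℝ) ≤ q := by exact_mod_cast Fintype.card_pos
  rcases Nat.even_or_odd' m with ⟨k, rfl | rfl⟩
  · rw [sum_erase_zero_quadraticCharℂ_pow_mul_addChar_of_even hψ (even_two_mul k), norm_mul,
      norm_gaussSum_pow_two_mul hF hψ, Nat.mul_div_cancel_left k two_pos, pow_succ]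
    gcongr
    split_ifs
    · rw [show (q : ℂ) - 1 = ((q - 1 : ℝ) : ℂ) by push_cast; rfl,
        Complex.norm_of_nonneg (by linarith)]
      linarith
    · simpa using hq
  · rw [gaussSum_pow_mul_sum_erase_zero_of_odd hF, norm_mul, norm_gaussSum_pow_two_mul hF hψ,
      show (2 * k + 1) / 2 = k by omega]
    exact mul_le_of_le_one_left (by positivity) (norm_quadraticCharℂ_le e)

lemma norm_gaussSum_pow_mul_sum_erase_zero_le_of_ne_zero (hF : ringChar F ≠ 2)
    (hψ : ψ.IsPrimitive) (m : ℕ) {e : F} (he : e ≠ 0) :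
    ‖gaussSum χ ψ ^ m * ∑ s ∈ univ.erase 0, χ s ^ m * ψ (s * e)‖ ≤
      (q : ℝ) ^ ((m + 1) / 2) := by
  rcases Nat.even_or_odd' m with ⟨k, rfl | rfl⟩
  · rw [sum_erase_zero_quadraticCharℂ_pow_mul_addChar_of_even hψ (even_two_mul k), if_neg he,
      norm_mul, norm_gaussSum_pow_two_mul hF hψ, show (2 * k + 1) / 2 = k by omega]
    simp
  · rw [gaussSum_pow_mul_sum_erase_zero_of_odd hF, norm_mul, norm_gaussSum_pow_two_mul hF hψ,
      show (2 * k + 1 + 1) / 2 = k + 1 by omega]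
    exact mul_le_of_le_one_left (by positivity) (norm_quadraticCharℂ_le e)

end QuadraticGaussSum

section Counting

variable {F : Type*} [Field F] [Fintype F] [DecidableEq F] {ψ : AddChar F ℂ}

local notation "χ" => quadraticCharℂ F
local notation "q" => Fintype.card F

lemma card_filter_mul_sq_eq_sum_addChar (hψ : ψ.IsPrimitive) {α : Type*} [Fintype α]
    (f g : α → F) (a b : F) :
    (#{x | f x = a ∧ g x = b} : ℂ) * q ^ 2 =
      ∑ s, ∑ t, ∑ x, ψ (s * (f x - a) + t * (g x - b)) := by
  have hdetect (x : α) : ∑ s, ∑ t, ψ (s * (f x - a) + t * (g x - b)) =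
      if f x = a ∧ g x = b then (q : ℂ) ^ 2 else 0 := by
    simp_rw [map_add_eq_mul, ← sum_mul_sum, sum_addChar_mul_eq_ite hψ, sub_eq_zero]
    split_ifs <;> simp_all [sq]
  rw [sum_congr rfl fun _ _ ↦ sum_comm, sum_comm, sum_congr rfl fun x _ ↦ hdetect x, sum_ite,
    sum_const_zero, add_zero, sum_const, nsmul_eq_mul]

variable {ι : Type*} [Fintype ι] [DecidableEq ι]

lemma sum_addChar_hyperplane (hψ : ψ.IsPrimitive) {v : ι → F} (hv : v ≠ 0) (t c : F) :
    ∑ y : ι → F, ψ (t * (∑ i, v i * y i - c)) =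
      if t = 0 then (q : ℂ) ^ Fintype.card ι else 0 := by
  split_ifs with ht
  · simp [ht]
  obtain ⟨j, hj⟩ := Function.ne_iff.mp hv
  have hsplit (y : ι → F) :
      ψ (t * (∑ i, v i * y i - c)) = ψ (-(t * c)) * ∏ i, ψ (y i * (t * v i)) := by
    rw [← map_sum_eq_prod, ← map_add_eq_mul, mul_sub, mul_sum]
    congr 1
    rw [neg_add_eq_sub]
    congr 1
    exact sum_congr rfl fun i _ ↦ by ring
  simp_rw [hsplit, ← mul_sum]
  rw [← Fintype.prod_sum fun i u ↦ ψ (u * (t * v i))]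
  refine mul_eq_zero_of_right _ (prod_eq_zero (mem_univ j) ?_)
  rw [sum_addChar_mul_eq_ite hψ, if_neg (mul_ne_zero ht hj)]

lemma sum_addChar_sphere_hyperplane (hF : ringChar F ≠ 2) (hψ : ψ.IsPrimitive) {s : F}
    (hs : s ≠ 0) (v : ι → F) (r t c : F) :
    ∑ y : ι → F, ψ (s * (∑ i, y i ^ 2 - r) + t * (∑ i, v i * y i - c)) =
      (χ s * gaussSum χ ψ) ^ Fintype.card ι *
        (ψ (-(s * r)) * ψ (-(∑ i, v i ^ 2) / (4 * s) * t ^ 2 + -c * t)) := by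
  have hsquares : ∑ i, -(t * v i) ^ 2 / (4 * s) = -(∑ i, v i ^ 2) / (4 * s) * t ^ 2 := by
    rw [neg_div, neg_mul, sum_div, sum_mul, ← sum_neg_distrib]
    exact sum_congr rfl fun i _ ↦ by ring
  calc ∑ y : ι → F, ψ (s * (∑ i, y i ^ 2 - r) + t * (∑ i, v i * y i - c))
      = ∑ y : ι → F,
          ψ (-(s * r)) * ψ (-(t * c)) * ∏ i, ψ (s * y i ^ 2 + t * v i * y i) := by
        refine sum_congr rfl fun y _ ↦ ?_
        rw [← map_sum_eq_prod, ← map_add_eq_mul, ← map_add_eq_mul, sum_add_distrib,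
          ← mul_sum]
        congr 1
        simp only [mul_assoc, ← mul_sum]
        ring
    _ = ψ (-(s * r)) * ψ (-(t * c)) *
          ∏ i, (χ s * gaussSum χ ψ * ψ (-(t * v i) ^ 2 / (4 * s))) := by
        rw [← mul_sum, ← Fintype.prod_sum fun i u ↦ ψ (s * u ^ 2 + t * v i * u)]
        simp_rw [sum_addChar_quadratic hF hψ hs]
    _ = _ := by
        rw [prod_mul_distrib, prod_const, card_univ, ← map_sum_eq_prod, hsquares,
          map_add_eq_mul, neg_mul, mul_comm c]
        ring

lemma norm_sum_erase_zero_mul_sum_addChar_quadratic_le (hF : ringChar F ≠ 2)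
    (hψ : ψ.IsPrimitive) {r : F} (hr : r ≠ 0) (V c : F) (n : ℕ) :
    ‖∑ s ∈ univ.erase 0, (χ s * gaussSum χ ψ) ^ n *
        (ψ (-(s * r)) * ∑ t, ψ (-V / (4 * s) * t ^ 2 + -c * t))‖ ≤
      (q : ℝ) ^ ((n + 1) / 2 + 1) := by
  rcases eq_or_ne V 0 with rfl | hV
  · have hline (s : F) :
        ∑ t, ψ (-0 / (4 * s) * t ^ 2 + -c * t) = if c = 0 then (q : ℂ) else 0 := by
      simp_rw [neg_zero, zero_div, zero_mul, zero_add, mul_comm (-c), sum_addChar_mul_eq_ite hψ,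
        neg_eq_zero]
    simp_rw [hline]
    split_ifs
    · have hterm (s : F) : (χ s * gaussSum χ ψ) ^ n * (ψ (-(s * r)) * q) =
          q * (gaussSum χ ψ ^ n * (χ s ^ n * ψ (s * -r))) := by
        rw [mul_neg]
        ring
      rw [sum_congr rfl fun s _ ↦ hterm s, ← mul_sum, ← mul_sum, norm_mul, Complex.norm_natCast,
        pow_succ, mul_comm]
      gcongr
      exact norm_gaussSum_pow_mul_sum_erase_zero_le_of_ne_zero hF hψ n (neg_ne_zero.mpr hr)
    · simp
  · have h4 := four_ne_zero_of_ringChar_ne_two hF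
    have hterm {s : F} (hs : s ≠ 0) :
        (χ s * gaussSum χ ψ) ^ n * (ψ (-(s * r)) * ∑ t, ψ (-V / (4 * s) * t ^ 2 + -c * t)) =
          χ (-V / 4) *
            (gaussSum χ ψ ^ (n + 1) * (χ s ^ (n + 1) * ψ (s * (c ^ 2 / V - r)))) := by
      have hu : -V / (4 * s) ≠ 0 := div_ne_zero (neg_ne_zero.mpr hV) (mul_ne_zero h4 hs)
      have hχ : χ (-V / (4 * s)) = χ (-V / 4) * χ s := by
        rw [show -V / 4 = -V / (4 * s) * s by field_simp, map_mul, mul_assoc, ← sq,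
          quadraticCharℂ_sq hs, mul_one]
      have hψ' :
          ψ (-(s * r)) * ψ (-(-c) ^ 2 / (4 * (-V / (4 * s)))) = ψ (s * (c ^ 2 / V - r)) := by
        rw [← map_add_eq_mul]
        congr 1
        field_simp
        ring
      rw [sum_addChar_quadratic hF hψ hu, hχ, ← hψ']
      ring
    rw [sum_congr rfl fun s hs ↦ hterm (ne_of_mem_erase hs), ← mul_sum, ← mul_sum, norm_mul]
    exact (mul_le_of_le_one_left (norm_nonneg _) (norm_quadraticCharℂ_le _)).trans
      (norm_gaussSum_pow_mul_sum_erase_zero_le hF hψ (n + 1) _)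

theorem card_sphere_inter_hyperplane_mul_sq_le (hF : ringChar F ≠ 2) {v : ι → F} (hv : v ≠ 0)
    {r : F} (hr : r ≠ 0) (c : F) :
    #{y : ι → F | ∑ i, y i ^ 2 = r ∧ ∑ i, v i * y i = c} * q ^ 2 ≤
      q ^ Fintype.card ι + q ^ ((Fintype.card ι + 1) / 2 + 1) := by
  obtain ⟨ψ, hψ⟩ : ∃ ψ : AddChar F ℂ, ψ.IsPrimitive :=
    ⟨_, AddChar.FiniteField.primitiveChar_to_Complex_isPrimitive F⟩
  have hcount : (#{y : ι → F | ∑ i, y i ^ 2 = r ∧ ∑ i, v i * y i = c} : ℂ) * q ^ 2 =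
      q ^ Fintype.card ι + ∑ s ∈ univ.erase 0, (χ s * gaussSum χ ψ) ^ Fintype.card ι *
        (ψ (-(s * r)) * ∑ t, ψ (-(∑ i, v i ^ 2) / (4 * s) * t ^ 2 + -c * t)) := by
    rw [card_filter_mul_sq_eq_sum_addChar hψ, ← add_sum_erase _ _ (mem_univ 0)]
    congr 1
    · simp_rw [zero_mul, zero_add, sum_addChar_hyperplane hψ hv]
      simp
    · refine sum_congr rfl fun s hs ↦ ?_
      simp_rw [sum_addChar_sphere_hyperplane hF hψ (ne_of_mem_erase hs), ← mul_sum]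
  have hbound : (#{y : ι → F | ∑ i, y i ^ 2 = r ∧ ∑ i, v i * y i = c} : ℝ) * q ^ 2 ≤
      q ^ Fintype.card ι + q ^ ((Fintype.card ι + 1) / 2 + 1) := by
    calc _ = ‖(#{y : ι → F | ∑ i, y i ^ 2 = r ∧ ∑ i, v i * y i = c} : ℂ) * q ^ 2‖ := by
          simp
      _ ≤ _ := by
          rw [hcount]
          exact (norm_add_le _ _).trans <| add_le_add (by simp)
            (norm_sum_erase_zero_mul_sum_addChar_quadratic_le hF hψ hr _ c _)
  exact_mod_cast hbound

end Counting

theorem sphere_inter_sphere_eq_image {F ι : Type*} [Field F] [Fintype ι] (h2 : (2 : F) ≠ 0)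
    (a b : ι → F) (r₁ r₂ : F) :
    {x : ι → F | ∑ i, (x i - a i) ^ 2 = r₁} ∩ {x | ∑ i, (x i - b i) ^ 2 = r₂} =
      (· + a) '' {y | ∑ i, y i ^ 2 = r₁ ∧
        ∑ i, (b i - a i) * y i = (r₁ + ∑ i, (b i - a i) ^ 2 - r₂) / 2} := by
  have hexpand (x : ι → F) : ∑ i, (x i - b i) ^ 2 = ∑ i, (x i - a i) ^ 2 -
      2 * ∑ i, (b i - a i) * (x i - a i) + ∑ i, (b i - a i) ^ 2 := by
    rw [mul_sum, ← sum_sub_distrib, ← sum_add_distrib]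
    exact sum_congr rfl fun i _ ↦ by ring
  rw [Set.image_add_right]
  ext x
  simp only [Set.mem_inter_iff, Set.mem_ofPred_eq, Set.mem_preimage,
    ← sub_eq_add_neg, hexpand, eq_div_iff h2]
  constructor
  · rintro ⟨h₁, h₂⟩
    exact ⟨h₁, by linear_combination h₁ - h₂⟩
  · rintro ⟨h₁, h₂⟩
    exact ⟨h₁, by linear_combination h₁ - h₂⟩

theorem stmt_2_general (F : Type*) [Field F] [Fintype F] (hq : Odd (Fintype.card F))
    (n : ℕ) (hn : 2 ≤ n) (a b : Fin n → F) (r₁ r₂ : F) (hr₁ : r₁ ≠ 0)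
    (hne : (a, r₁) ≠ (b, r₂)) :
    Set.ncard ({x : Fin n → F | ∑ i, (x i - a i) ^ 2 = r₁} ∩
        {x : Fin n → F | ∑ i, (x i - b i) ^ 2 = r₂}) ≤
      Fintype.card F ^ (n - 2) + Fintype.card F ^ ((n - 1) / 2) := by
  classical
  have hF : ringChar F ≠ 2 := fun h ↦ by
    have := FiniteField.even_card_iff_char_two.mp h
    rw [Nat.odd_iff] at hq
    omega
  rcases eq_or_ne a b with rfl | hab
  · have hr : r₁ ≠ r₂ := fun h ↦ hne (h ▸ rfl)
    exact ((Set.ncard_eq_zero).mpr (Set.eq_empty_of_forall_notMem fun x hx ↦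
      hr (hx.1.symm.trans hx.2))).le.trans (Nat.zero_le _)
  rw [sphere_inter_sphere_eq_image (Ring.two_ne_zero hF), Set.ncard_image_of_injective _
    (add_left_injective a), Set.ncard_eq_toFinset_card']
  have hcount := card_sphere_inter_hyperplane_mul_sq_le hF (v := b - a)
    (sub_ne_zero.mpr hab.symm) hr₁ ((r₁ + ∑ i, (b i - a i) ^ 2 - r₂) / 2)
  have hexp : Fintype.card F ^ n + Fintype.card F ^ ((n + 1) / 2 + 1) =
      (Fintype.card F ^ (n - 2) + Fintype.card F ^ ((n - 1) / 2)) * Fintype.card F ^ 2 := by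
    rw [add_mul, ← pow_add, ← pow_add]
    congr 2 <;> omega
  rw [Fintype.card_fin, hexp] at hcount
  refine Nat.le_of_mul_le_mul_right ?_ (pow_pos (Fintype.card_pos (α := F)) 2)
  convert hcount using 2
  simp

/-- Two distinct spheres in `F_q^n` intersect in at most
`q^(n-2) + q^⌊(n-1)/2⌋` points. -/
theorem stmt_2 (F : Type*) [Field F] [Fintype F] (hq : Odd (Fintype.card F))
    (n : ℕ) (hn : 2 ≤ n) (a b : Fin n → F) (r₁ r₂ : F) (hr₁ : r₁ ≠ 0) (hr₂ : r₂ ≠ 0)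
    (hne : (a, r₁) ≠ (b, r₂)) :
    Set.ncard ({x : Fin n → F | ∑ i, (x i - a i) ^ 2 = r₁} ∩
        {x : Fin n → F | ∑ i, (x i - b i) ^ 2 = r₂}) ≤
      Fintype.card F ^ (n - 2) + Fintype.card F ^ ((n - 1) / 2) :=
  stmt_2_general F hq n hn a b r₁ r₂ hr₁ hne
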